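/- In Algorithm 6, if agent a misreports v'_a/τ'_a > v_a/τ_a and receives a strictly larger allocation x'_a > x_a, then the per-unit price she is charged strictly exceeds her true ratio: p'_a/x'_a > v_a/τ_a, i.e., v_a·x'_a < τ_a·p'_a (her RoS constraint is violated). -/

import Mathlib

/-- The reported ratio of each agent, rounded down to a power of `1+ε`. -/
noncomputable def wfun (n : ℕ) (ε : ℝ) (ρ : Fin n → ℝ) (i : Fin n) : ℝ :=
  (1 + ε) ^ (⌊Real.logb (1 + ε) (ρ i)⌋ : ℤ)

/-- The permutation sorting the agents in decreasing order of rounded ratio `wfun`,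
breaking ties in a fixed manner (by agent index): position `t` holds agent
`sortPerm n ε ρ t`. -/
noncomputable def sortPerm (n : ℕ) (ε : ℝ) (ρ : Fin n → ℝ) : Equiv.Perm (Fin n) :=
  Tuple.sort (fun i => (toLex (-(wfun n ε ρ i), i) : Lex (ℝ × Fin n)))

/-- The cumulative budget `B[t]` of the agents in the first `t+1` sorted positions. -/
noncomputable def bcum (n : ℕ) (ε : ℝ) (B ρ : Fin n → ℝ) (t : Fin n) : ℝ :=
  ∑ s ∈ Finset.univ.filter (fun s => s ≤ t), B (sortPerm n ε ρ s)

/-- The set of positions `t` with `B[t] ≤ w_{σ(t)}`; Algorithm 6 uses its maximum `k`. -/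
noncomputable def validSet (n : ℕ) (ε : ℝ) (B ρ : Fin n → ℝ) : Finset (Fin n) :=
  Finset.univ.filter (fun t => bcum n ε B ρ t ≤ wfun n ε ρ (sortPerm n ε ρ t))

open Classical in
/-- Algorithm 6 (single divisible item with public budgets), as a function of the
budgets `B` and the reported ratios `ρ i` (standing for `v i / τ i`): returns the
allocation and payment of every agent.  With `k` the maximum valid position,
market clearing price `p̄ = max (B[k]) w_{k+1}` (where `w_{k+1} = 0` if `k` is last):
if `B[k] > w_{k+1}`, the top-`k` agents get `B i/((1+ε)B[k])` at per-unit price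
`C[k] = (1+ε)^⌈log_{1+ε} B[k]⌉`; otherwise they get `B i/((1+ε)w_{k+1})` at per-unit
price `(1+ε)w_{k+1}` (or `w_{k+1}` if `w i = w_{k+1}`), and the agent at position `k+1`
gets the leftover `1/(1+ε) − B[k]/((1+ε)w_{k+1})` at per-unit price `w_{k+1}`. -/
noncomputable def mech (n : ℕ) (ε : ℝ) (B ρ : Fin n → ℝ) :
    (Fin n → ℝ) × (Fin n → ℝ) :=
  if h : (validSet n ε B ρ).Nonempty then
    let σ := sortPerm n ε ρ
    let k := (validSet n ε B ρ).max' h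
    let Bk := bcum n ε B ρ k
    let wnext : ℝ :=
      if h2 : (k : ℕ) + 1 < n then wfun n ε ρ (σ ⟨(k : ℕ) + 1, h2⟩) else 0
    if wnext < Bk then
      let C : ℝ := (1 + ε) ^ (⌈Real.logb (1 + ε) Bk⌉ : ℤ)
      (fun a => if σ.symm a ≤ k then B a / ((1 + ε) * Bk) else 0,
       fun a => if σ.symm a ≤ k then (B a / ((1 + ε) * Bk)) * C else 0)
    else
      (fun a => if σ.symm a ≤ k then B a / ((1 + ε) * wnext)
        else if (σ.symm a : ℕ) = (k : ℕ) + 1 then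
          1 / (1 + ε) - Bk / ((1 + ε) * wnext)
        else 0,
       fun a => if σ.symm a ≤ k then
          (if wnext < wfun n ε ρ a then (B a / ((1 + ε) * wnext)) * ((1 + ε) * wnext)
           else (B a / ((1 + ε) * wnext)) * wnext)
        else if (σ.symm a : ℕ) = (k : ℕ) + 1 then
          (1 / (1 + ε) - Bk / ((1 + ε) * wnext)) * wnext
        else 0)
  else (fun _ => 0, fun _ => 0)

/-!
Raising her report can only raise `a`'s rounded ratio `w_a`, and as rounded ratios are powers
of `1 + ε`, a change means `w'_a ≥ (1 + ε) w_a > ρ_a`. Suppose that under the misreport `a` wins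
at a clearing price `p̄' ≤ w_a` while `w'_{k'+1} < w_a`. Every agent ranked at or above `a`, or
within the true cutoff, then has ratio above `w'_{k'+1}` and hence wins under the misreport, so
these prefixes fit into the budget `B'[k'] ≤ p̄'`. Thus `a` already wins truthfully, at a clearing
price at most `p̄'`, and receives at least `B_a / ((1 + ε) p̄') = x'_a`. A strict gain therefore
forces `p̄' > w_a` or `w'_{k'+1} ≥ w_a`, and in each branch of the pricing rule `a` then pays per
unit at least `(1 + ε) w_a > ρ_a`; an agent just below the cutoff pays `w'_a` per unit.
-/

section ZpowLogb

variable {b x : ℝ} {m m' : ℤ}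

lemma lt_mul_zpow_floor_logb (hb : 1 < b) (hx : 0 < x) : x < b * b ^ ⌊Real.logb b x⌋ := by
  have h : b ^ Real.logb b x < b ^ ((⌊Real.logb b x⌋ + 1 : ℤ) : ℝ) := by
    refine Real.rpow_lt_rpow_of_exponent_lt hb ?_
    push_cast
    exact Int.lt_floor_add_one _
  rwa [Real.rpow_intCast, Real.rpow_logb (by linarith) hb.ne' hx, zpow_add_one₀ (by linarith),
    mul_comm] at h

lemma mul_zpow_le_zpow_of_zpow_lt (hb : 1 < b) (h : b ^ m < b ^ m') : b * b ^ m ≤ b ^ m' := by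
  have hmm' : m + 1 ≤ m' := (zpow_lt_zpow_iff_right₀ hb).mp h
  simpa only [zpow_add_one₀ (by linarith : b ≠ 0), mul_comm] using
    zpow_le_zpow_right₀ hb.le hmm'

lemma mul_zpow_le_zpow_ceil_logb (hb : 1 < b) (h : b ^ m < x) :
    b * b ^ m ≤ b ^ ⌈Real.logb b x⌉ := by
  have hx : 0 < x := (zpow_pos (by linarith) m).trans h
  have hm : (m : ℝ) < Real.logb b x := by
    rwa [Real.lt_logb_iff_rpow_lt hb hx, Real.rpow_intCast]
  have hmc : m + 1 ≤ ⌈Real.logb b x⌉ := Int.add_one_le_of_lt (Int.lt_ceil.mpr hm)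
  simpa only [zpow_add_one₀ (by linarith : b ≠ 0), mul_comm] using
    zpow_le_zpow_right₀ hb.le hmc

end ZpowLogb

namespace Algorithm6

variable {n : ℕ} {ε : ℝ} {B ρ ρ' : Fin n → ℝ} {a : Fin n}

lemma wfun_le_wfun (hε : 0 < ε) (ha : 0 < ρ a) (h : ρ a ≤ ρ' a) :
    wfun n ε ρ a ≤ wfun n ε ρ' a :=
  zpow_le_zpow_right₀ (by linarith)
    (Int.floor_le_floor (Real.logb_le_logb_of_le (by linarith) ha h))

lemma lt_mul_wfun (hε : 0 < ε) (ha : 0 < ρ a) : ρ a < (1 + ε) * wfun n ε ρ a :=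
  lt_mul_zpow_floor_logb (by linarith) ha

lemma mul_wfun_le_wfun_of_lt (hε : 0 < ε) (h : wfun n ε ρ a < wfun n ε ρ' a) :
    (1 + ε) * wfun n ε ρ a ≤ wfun n ε ρ' a :=
  mul_zpow_le_zpow_of_zpow_lt (by linarith) h

lemma mech_congr (h : wfun n ε ρ = wfun n ε ρ') : mech n ε B ρ = mech n ε B ρ' := by
  unfold mech validSet bcum sortPerm
  rw [h]

lemma wfun_sortPerm_antitone : Antitone fun t => wfun n ε ρ (sortPerm n ε ρ t) :=
  fun _ _ hst => by
    simpa [sortPerm] using Prod.Lex.monotone_fst_ofLex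
      (Tuple.monotone_sort (fun i => toLex (-(wfun n ε ρ i), i)) hst)

lemma wfun_le_of_symm_le {i : Fin n} {t : Fin n} (h : (sortPerm n ε ρ).symm i ≤ t) :
    wfun n ε ρ (sortPerm n ε ρ t) ≤ wfun n ε ρ i := by
  simpa using wfun_sortPerm_antitone (ε := ε) (ρ := ρ) h

lemma bcum_eq_sum (t : Fin n) :
    bcum n ε B ρ t = ∑ i ∈ Finset.univ.filter (fun i => (sortPerm n ε ρ).symm i ≤ t), B i :=
  Finset.sum_equiv (sortPerm n ε ρ) (by simp) (by simp)

lemma bcum_pos (hB : ∀ i, 0 < B i) (t : Fin n) : 0 < bcum n ε B ρ t :=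
  Finset.sum_pos (fun _ _ => hB _) ⟨t, by simp⟩

lemma mem_validSet {t : Fin n} :
    t ∈ validSet n ε B ρ ↔ bcum n ε B ρ t ≤ wfun n ε ρ (sortPerm n ε ρ t) := by
  simp [validSet]

-- The cutoff position `k`, the next ratio `w_{k+1}` and the clearing price `p̄` of Algorithm 6.
noncomputable def cutoff (n : ℕ) (ε : ℝ) (B ρ : Fin n → ℝ) (h : (validSet n ε B ρ).Nonempty) :
    Fin n :=
  (validSet n ε B ρ).max' h

noncomputable def nextRatio (n : ℕ) (ε : ℝ) (B ρ : Fin n → ℝ)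
    (h : (validSet n ε B ρ).Nonempty) : ℝ :=
  if h2 : (cutoff n ε B ρ h : ℕ) + 1 < n then
    wfun n ε ρ (sortPerm n ε ρ ⟨(cutoff n ε B ρ h : ℕ) + 1, h2⟩) else 0

noncomputable def clearingPrice (n : ℕ) (ε : ℝ) (B ρ : Fin n → ℝ)
    (h : (validSet n ε B ρ).Nonempty) : ℝ :=
  max (bcum n ε B ρ (cutoff n ε B ρ h)) (nextRatio n ε B ρ h)

def IsWinner (n : ℕ) (ε : ℝ) (B ρ : Fin n → ℝ) (a : Fin n) : Prop :=
  ∃ h : (validSet n ε B ρ).Nonempty, (sortPerm n ε ρ).symm a ≤ cutoff n ε B ρ h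

open Classical in
lemma mech_of_nonempty (h : (validSet n ε B ρ).Nonempty) :
    mech n ε B ρ =
      let σ := sortPerm n ε ρ
      let k := cutoff n ε B ρ h
      let Bk := bcum n ε B ρ k
      let wnext := nextRatio n ε B ρ h
      if wnext < Bk then
        (fun a => if σ.symm a ≤ k then B a / ((1 + ε) * Bk) else 0,
         fun a => if σ.symm a ≤ k then
           (B a / ((1 + ε) * Bk)) * (1 + ε) ^ (⌈Real.logb (1 + ε) Bk⌉ : ℤ) else 0)
      else
        (fun a => if σ.symm a ≤ k then B a / ((1 + ε) * wnext)
          else if (σ.symm a : ℕ) = (k : ℕ) + 1 then 1 / (1 + ε) - Bk / ((1 + ε) * wnext)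
          else 0,
         fun a => if σ.symm a ≤ k then
           (if wnext < wfun n ε ρ a then (B a / ((1 + ε) * wnext)) * ((1 + ε) * wnext)
            else (B a / ((1 + ε) * wnext)) * wnext)
          else if (σ.symm a : ℕ) = (k : ℕ) + 1 then
            (1 / (1 + ε) - Bk / ((1 + ε) * wnext)) * wnext
          else 0) := by
  rw [mech, dif_pos h]
  rfl

lemma clearingPrice_pos (hB : ∀ i, 0 < B i) (h : (validSet n ε B ρ).Nonempty) :
    0 < clearingPrice n ε B ρ h :=
  lt_max_of_lt_left (bcum_pos hB _)

lemma symm_le_cutoff_of_nextRatio_lt (h : (validSet n ε B ρ).Nonempty) {i : Fin n}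
    (hi : nextRatio n ε B ρ h < wfun n ε ρ i) : (sortPerm n ε ρ).symm i ≤ cutoff n ε B ρ h := by
  by_contra hlt
  have hle : (cutoff n ε B ρ h : ℕ) + 1 ≤ (sortPerm n ε ρ).symm i := Fin.lt_def.mp (not_le.mp hlt)
  have hk : (cutoff n ε B ρ h : ℕ) + 1 < n := hle.trans_lt (Fin.is_lt _)
  rw [nextRatio, dif_pos hk] at hi
  have := wfun_sortPerm_antitone (ε := ε) (ρ := ρ) (show (⟨_, hk⟩ : Fin n) ≤ _ from hle)
  simp only [Equiv.apply_symm_apply] at this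
  exact not_lt.mpr this hi

lemma nextRatio_eq_wfun (h : (validSet n ε B ρ).Nonempty)
    (ha : ((sortPerm n ε ρ).symm a : ℕ) = cutoff n ε B ρ h + 1) :
    nextRatio n ε B ρ h = wfun n ε ρ a := by
  have hk : (cutoff n ε B ρ h : ℕ) + 1 < n := ha ▸ Fin.is_lt _
  rw [nextRatio, dif_pos hk, show (⟨_, hk⟩ : Fin n) = (sortPerm n ε ρ).symm a from Fin.ext ha.symm,
    Equiv.apply_symm_apply]

lemma mech_fst_nonneg (hε : 0 < ε) (hB : ∀ i, 0 < B i) : 0 ≤ (mech n ε B ρ).1 a := by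
  by_cases h : (validSet n ε B ρ).Nonempty
  · have hBk := bcum_pos (ε := ε) (ρ := ρ) hB (cutoff n ε B ρ h)
    have := hB a
    rw [mech_of_nonempty h]
    dsimp only
    split_ifs with c
    · dsimp only
      split_ifs <;> positivity
    · have hnext := hBk.trans_le (not_lt.mp c)
      dsimp only
      split_ifs
      · positivity
      · rw [sub_nonneg, div_le_div_iff₀ (by positivity) (by positivity)]
        nlinarith [not_lt.mp c]
      · rfl
  · simp [mech, dif_neg h]

lemma mech_fst_of_winner (h : (validSet n ε B ρ).Nonempty)
    (ha : (sortPerm n ε ρ).symm a ≤ cutoff n ε B ρ h) :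
    (mech n ε B ρ).1 a = B a / ((1 + ε) * clearingPrice n ε B ρ h) := by
  rw [mech_of_nonempty h, clearingPrice]
  dsimp only
  split_ifs with c
  · simp only [ha, if_true, max_eq_left c.le]
  · simp only [ha, if_true, max_eq_right (not_lt.mp c)]

lemma mul_le_mech_snd_of_winner (hε : 0 < ε) (hB : ∀ i, 0 < B i)
    (h : (validSet n ε B ρ).Nonempty) (ha : (sortPerm n ε ρ).symm a ≤ cutoff n ε B ρ h) {m : ℤ}
    (hm : clearingPrice n ε B ρ h ≤ (1 + ε) ^ m → (1 + ε) ^ m ≤ nextRatio n ε B ρ h)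
    (hma : (1 + ε) * (1 + ε) ^ m ≤ wfun n ε ρ a) :
    (mech n ε B ρ).1 a * ((1 + ε) * (1 + ε) ^ m) ≤ (mech n ε B ρ).2 a := by
  have hBk := bcum_pos (ε := ε) (ρ := ρ) hB (cutoff n ε B ρ h)
  have := hB a
  rw [clearingPrice] at hm
  rw [mech_of_nonempty h]
  dsimp only
  split_ifs with c
  · have hlt : (1 + ε) ^ m < bcum n ε B ρ (cutoff n ε B ρ h) := by
      by_contra! hle
      linarith [hm (max_le hle (c.le.trans hle))]
    simp only [if_pos ha]
    gcongr
    exact mul_zpow_le_zpow_ceil_logb (by linarith) hlt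
  · have hnext : (1 + ε) ^ m ≤ nextRatio n ε B ρ h := by
      by_contra! hlt
      linarith [hm (max_le ((not_lt.mp c).trans hlt.le) hlt.le)]
    have := hBk.trans_le (not_lt.mp c)
    simp only [if_pos ha]
    split_ifs with hwa
    · gcongr
    · gcongr
      linarith [not_lt.mp hwa]

lemma mech_snd_of_not_winner (ha : ¬ IsWinner n ε B ρ a) :
    (mech n ε B ρ).2 a = (mech n ε B ρ).1 a * wfun n ε ρ a := by
  by_cases h : (validSet n ε B ρ).Nonempty
  · have ha : ¬ (sortPerm n ε ρ).symm a ≤ cutoff n ε B ρ h := fun ha' => ha ⟨h, ha'⟩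
    rw [mech_of_nonempty h]
    dsimp only
    split_ifs with c
    · simp [ha]
    · by_cases hk : ((sortPerm n ε ρ).symm a : ℕ) = cutoff n ε B ρ h + 1
      · simp only [ha, hk, if_false, if_true, nextRatio_eq_wfun h hk]
      · simp [ha, hk]
  · simp [mech, dif_neg h]

lemma bcum_le_bcum_cutoff (hB : ∀ i, 0 < B i) (hw : ∀ i, i ≠ a → wfun n ε ρ' i = wfun n ε ρ i)
    (h' : (validSet n ε B ρ').Nonempty) (ha : (sortPerm n ε ρ').symm a ≤ cutoff n ε B ρ' h')
    {t : Fin n} (ht : nextRatio n ε B ρ' h' < wfun n ε ρ (sortPerm n ε ρ t)) :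
    bcum n ε B ρ t ≤ bcum n ε B ρ' (cutoff n ε B ρ' h') := by
  rw [bcum_eq_sum, bcum_eq_sum]
  refine Finset.sum_le_sum_of_subset_of_nonneg (fun i hi => ?_) (fun i _ _ => (hB i).le)
  simp only [Finset.mem_filter, Finset.mem_univ, true_and] at hi ⊢
  by_cases hia : i = a
  · exact hia ▸ ha
  · exact symm_le_cutoff_of_nextRatio_lt h' (hw i hia ▸ ht.trans_le (wfun_le_of_symm_le hi))

lemma le_mech_fst_of_clearingPrice_le (hε : 0 < ε) (hB : ∀ i, 0 < B i)
    (hw : ∀ i, i ≠ a → wfun n ε ρ' i = wfun n ε ρ i)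
    (h' : (validSet n ε B ρ').Nonempty) (ha : (sortPerm n ε ρ').symm a ≤ cutoff n ε B ρ' h')
    (hp : clearingPrice n ε B ρ' h' ≤ wfun n ε ρ a) (hnext : nextRatio n ε B ρ' h' < wfun n ε ρ a) :
    B a / ((1 + ε) * clearingPrice n ε B ρ' h') ≤ (mech n ε B ρ).1 a := by
  set D := clearingPrice n ε B ρ' h'
  have hBD : bcum n ε B ρ' (cutoff n ε B ρ' h') ≤ D := le_max_left _ _
  have hnextD : nextRatio n ε B ρ' h' ≤ D := le_max_right _ _
  have hmem : (sortPerm n ε ρ).symm a ∈ validSet n ε B ρ := by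
    rw [mem_validSet, Equiv.apply_symm_apply]
    refine (bcum_le_bcum_cutoff hB hw h' ha ?_).trans (hBD.trans hp)
    rwa [Equiv.apply_symm_apply]
  have h : (validSet n ε B ρ).Nonempty := ⟨_, hmem⟩
  have hBk : bcum n ε B ρ (cutoff n ε B ρ h) ≤ D := by
    by_contra! hlt
    have hk := mem_validSet.mp ((validSet n ε B ρ).max'_mem h)
    have := bcum_le_bcum_cutoff hB hw h' ha (t := cutoff n ε B ρ h)
      (hnextD.trans_lt (hlt.trans_le hk))
    linarith
  have hnextk : nextRatio n ε B ρ h ≤ D := by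
    rw [nextRatio]
    split_ifs with hk
    · by_contra! hlt
      have hmem' : (⟨_, hk⟩ : Fin n) ∈ validSet n ε B ρ := mem_validSet.mpr
        ((bcum_le_bcum_cutoff hB hw h' ha (hnextD.trans_lt hlt)).trans (hBD.trans hlt.le))
      have := Fin.le_def.mp ((validSet n ε B ρ).le_max' _ hmem')
      simp [cutoff] at this
    · exact (clearingPrice_pos hB h').le
  rw [mech_fst_of_winner h ((validSet n ε B ρ).le_max' _ hmem)]
  have := clearingPrice_pos hB h
  have := hB a
  gcongr
  exact max_le hBk hnextk

end Algorithm6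

open Algorithm6

theorem stmt_13_general (n : ℕ) (ε : ℝ) (hε : 0 < ε) (B v τ ρ ρ' : Fin n → ℝ) (a : Fin n)
    (hB : ∀ i, 0 < B i) (hv : ∀ i, 0 < v i) (hτ : ∀ i, 0 < τ i)
    (hρ : ∀ i, ρ i = v i / τ i)
    (hother : ∀ i, i ≠ a → ρ' i = ρ i) (hinc : ρ a < ρ' a)
    (hmore : (mech n ε B ρ).1 a < (mech n ε B ρ').1 a) :
    v a * (mech n ε B ρ').1 a < τ a * (mech n ε B ρ').2 a := by
  have hρa : 0 < ρ a := hρ a ▸ div_pos (hv a) (hτ a)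
  have hx' : 0 < (mech n ε B ρ').1 a := (mech_fst_nonneg hε hB).trans_lt hmore
  have hw : ∀ i, i ≠ a → wfun n ε ρ' i = wfun n ε ρ i := fun i hi => by
    rw [wfun, wfun, hother i hi]
  have hlt : wfun n ε ρ a < wfun n ε ρ' a := by
    refine (wfun_le_wfun hε hρa hinc.le).lt_of_ne fun heq => hmore.ne ?_
    refine congrArg (fun m => m.1 a) (mech_congr (funext fun i => ?_))
    by_cases hi : i = a
    · exact hi ▸ heq
    · exact (hw i hi).symm
  have hstep := mul_wfun_le_wfun_of_lt hε hlt
  have hpay : (mech n ε B ρ').1 a * ((1 + ε) * wfun n ε ρ a) ≤ (mech n ε B ρ').2 a := by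
    by_cases hwin : IsWinner n ε B ρ' a
    · obtain ⟨h', ha⟩ := hwin
      refine mul_le_mech_snd_of_winner hε hB h' ha (fun hp => not_lt.mp fun hn => ?_) hstep
      exact not_lt.mpr (le_mech_fst_of_clearingPrice_le hε hB hw h' ha hp hn)
        (mech_fst_of_winner h' ha ▸ hmore)
    · rw [mech_snd_of_not_winner hwin]
      exact mul_le_mul_of_nonneg_left hstep hx'.le
  calc v a * (mech n ε B ρ').1 a = ρ a * τ a * (mech n ε B ρ').1 a := by
        rw [hρ a, div_mul_cancel₀ _ (hτ a).ne']
    _ < (1 + ε) * wfun n ε ρ a * τ a * (mech n ε B ρ').1 a := by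
        gcongr
        · exact hτ a
        · exact lt_mul_wfun hε hρa
    _ ≤ τ a * (mech n ε B ρ').2 a := by nlinarith [hτ a]

/-- In Algorithm 6, an agent `a` who misreports a higher ratio `v' a / τ' a > v a / τ a`
and thereby receives a strictly larger allocation necessarily violates her true RoS
constraint: `v a * x' a < τ a * p' a`, where `(x', p')` is the outcome under the
misreport. -/
theorem stmt_13 (n : ℕ) (ε : ℝ) (hε : 0 < ε) (B v τ ρ ρ' : Fin n → ℝ) (a : Fin n)
    (hB : ∀ i, 0 < B i) (hv : ∀ i, 0 < v i) (hτ : ∀ i, 0 < τ i)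
    (hρ : ∀ i, ρ i = v i / τ i)
    (hρ'pos : ∀ i, 0 < ρ' i)
    (hother : ∀ i, i ≠ a → ρ' i = ρ i) (hinc : ρ a < ρ' a)
    (hval : (validSet n ε B ρ).Nonempty) (hval' : (validSet n ε B ρ').Nonempty)
    (hmore : (mech n ε B ρ).1 a < (mech n ε B ρ').1 a) :
    v a * (mech n ε B ρ').1 a < τ a * (mech n ε B ρ').2 a :=
  stmt_13_general n ε hε B v τ ρ ρ' a hB hv hτ hρ hother hinc hmore
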